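/- Let r ≥ 4 and t ≥ 2r be integers and let G be an r-graph on vertex set [t]. Let x = (x_1,…,x_t) be an optimal weighting for G with x_1 ≥ x_2 ≥ ⋯ ≥ x_t ≥ 0. Then either x_1 < x_{t−2r+3} + x_{t−2r+4}, or λ(G) ≤ (1/r!)·(t−r)^{r−1}·(∏_{i=t−r+2}^{t−2} i) / ((t−r+1)^{r−2}·(t−1)^{r−2}), and this quantity is strictly less than (1/r!)·(∏_{i=t−r}^{t−1} i)/(t−1)^r = λ([t−1]^{(r)}). -/

import Mathlib

/-- `lagEval E x` is λ(G,x): the sum over the edges of `E` of the product of the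
weights (under `x`) of their vertices. -/
def lagEval (E : Finset (Finset ℕ)) (x : ℕ → ℝ) : ℝ :=
  ∑ e ∈ E, ∏ i ∈ e, x i

/-- A feasible weighting: nonnegative entries, finitely supported, total weight 1. -/
def Feasible (x : ℕ → ℝ) : Prop :=
  (∀ i, 0 ≤ x i) ∧ ∃ S : Finset ℕ, (∀ i ∉ S, x i = 0) ∧ ∑ i ∈ S, x i = 1

/-- A feasible weighting on the vertex set [n] = {1,…,n}. -/
def FeasibleOn (n : ℕ) (x : ℕ → ℝ) : Prop :=
  (∀ i, 0 ≤ x i) ∧ (∀ i ∉ Finset.Icc 1 n, x i = 0) ∧ ∑ i ∈ Finset.Icc 1 n, x i = 1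

/-- The Lagrangian λ(G) of a hypergraph with edge set `E`: the supremum (in fact
maximum) of λ(G,x) over all feasible weightings `x`. -/
noncomputable def lagrangian (E : Finset (Finset ℕ)) : ℝ :=
  sSup {y : ℝ | ∃ x : ℕ → ℝ, Feasible x ∧ lagEval E x = y}

/-- `completeG s r` is [s]^{(r)}, the complete r-graph on {1,…,s}. -/
def completeG (s r : ℕ) : Finset (Finset ℕ) :=
  (Finset.Icc 1 s).powersetCard r

/-- `E` is (the edge set of) an r-graph on the vertex set [n] = {1,…,n}. -/
def IsRGraphOn (r n : ℕ) (E : Finset (Finset ℕ)) : Prop :=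
  ∀ e ∈ E, e.card = r ∧ e ⊆ Finset.Icc 1 n

/-- The r-graph `E` contains a clique of order `s` (inside the vertex set `V`):
some `s`-element subset of `V` has all of its `r`-element subsets as edges. -/
def ContainsCliqueOn (V : Finset ℕ) (r s : ℕ) (E : Finset (Finset ℕ)) : Prop :=
  ∃ S : Finset ℕ, S ⊆ V ∧ S.card = s ∧ S.powersetCard r ⊆ E

/-- `DomLE A B`: `A` and `B` have the same size and, listing both in increasing
order as `i_1 < ⋯ < i_r` and `j_1 < ⋯ < j_r`, one has `i_k ≤ j_k` for all `k`
(equivalently, for every threshold `c`, `A` has at most as many elements above `c`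
as `B`). -/
def DomLE (A B : Finset ℕ) : Prop :=
  A.card = B.card ∧
    ∀ c : ℕ, (A.filter fun a => c < a).card ≤ (B.filter fun b => c < b).card

/-- `E` is left-compressed: together with any edge it contains every set of positive
integers dominating it from the left. -/
def LeftCompressed (E : Finset (Finset ℕ)) : Prop :=
  ∀ B ∈ E, ∀ A : Finset ℕ, (∀ a ∈ A, 1 ≤ a) → DomLE A B → A ∈ E

/-- `nbhd E i` is E_i, the (r-1)-neighborhood of the vertex `i`:
all sets `A` with `i ∉ A` and `A ∪ {i} ∈ E`. -/
def nbhd (E : Finset (Finset ℕ)) (i : ℕ) : Finset (Finset ℕ) :=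
  (E.filter fun e => i ∈ e).image fun e => e.erase i

/-- `nbhd2 E i j` is E_{ij}, the (r-2)-neighborhood of the pair of vertices `i, j`. -/
def nbhd2 (E : Finset (Finset ℕ)) (i j : ℕ) : Finset (Finset ℕ) :=
  (E.filter fun e => i ∈ e ∧ j ∈ e).image fun e => (e.erase i).erase j

/-- `C` consists of the first `m` r-element subsets of {1,2,3,…} in the colex
ordering: it has `m` edges, all of them r-element sets of positive integers, and it
is an initial segment for the colex order. -/
def IsColexSegment (r m : ℕ) (C : Finset (Finset ℕ)) : Prop :=
  C.card = m ∧ (∀ e ∈ C, e.card = r ∧ ∀ a ∈ e, 1 ≤ a) ∧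
    ∀ A B : Finset ℕ, A.card = r → (∀ a ∈ A, 1 ≤ a) → B ∈ C →
      toColex A < toColex B → A ∈ C

/-!
If `x₁ ≥ x_{t-2r+3} + x_{t-2r+4}`, then, the weights being sorted, `x₁ ≥ 1/(t-r+1)`. An optimal
weighting with `x₁ > 0` satisfies the Lagrange condition `λ(E₁, x) = r λ(G)`, and `E₁` consists of
`(r-1)`-subsets of `{2, …, t}`, so Maclaurin's inequality gives
`λ(G) ≤ (1/r) C(t-1, r-1) ((1 - x₁)/(t-1))^(r-1)`; inserting the bound on `x₁` yields the stated
quantity. It is smaller than `C(t-1, r)/(t-1)^r = λ([t-1]^(r))` because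
`a^(r-2) (a + r - 1) < (a + 1)^(r-1)` for `a = t - r > 0`.
-/

open Finset

namespace Multiset

lemma esymm_cons_succ {R : Type*} [CommSemiring R] (a : R) (s : Multiset R) (k : ℕ) :
    (a ::ₘ s).esymm (k + 1) = s.esymm (k + 1) + a * s.esymm k := by
  simp [esymm, powersetCard_cons, map_map, sum_map_mul_left]

/-- Maclaurin's inequality. Adding a point `a` moves the mean from `μ` to `ν`, and the induction
step is the tangent-line bound `μ ^ (k + 1) + (k + 1) μ ^ k (ν - μ) ≤ ν ^ (k + 1)`. -/
theorem esymm_le_choose_mul_pow {R : Type*} [Field R] [LinearOrder R] [IsStrictOrderedRing R]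
    (s : Multiset R) (hs : ∀ a ∈ s, 0 ≤ a) (k : ℕ) :
    s.esymm k ≤ s.card.choose k * (s.sum / s.card) ^ k := by
  induction s using Multiset.induction_on generalizing k with
  | empty => cases k <;> simp [esymm, powersetCard_zero_right]
  | cons a s ih =>
    have ha : 0 ≤ a := hs a (mem_cons_self a s)
    have hs' : ∀ b ∈ s, 0 ≤ b := fun b hb => hs b (mem_cons_of_mem hb)
    cases k with
    | zero => simp [esymm]
    | succ k =>
      set n := s.card
      set μ := s.sum / n
      have hμ : 0 ≤ μ := div_nonneg (sum_nonneg hs') n.cast_nonneg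
      have hsum : s.sum = n * μ := by
        rcases eq_or_ne n 0 with hn | hn
        · simp [card_eq_zero.1 hn, hn]
        · simp [μ, mul_div_cancel₀, hn]
      set ν := (a + n * μ) / (n + 1)
      have hν : 0 ≤ ν := by positivity
      have htangent : μ ^ (k + 1) + (k + 1 : ℕ) * μ ^ k * (ν - μ) ≤ ν ^ (k + 1) := by
        simpa using pow_add_mul_le_add_pow hμ (b := ν - μ) (by linarith) (k + 1)
      have hch : ((n + 1).choose (k + 1) : R) * (k + 1 : ℕ) = n.choose k * (n + 1) := by
        exact_mod_cast (Nat.add_one_mul_choose_eq n k).symm.trans (by ring)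
      have hpas : ((n + 1).choose (k + 1) : R) = n.choose k + n.choose (k + 1) := by
        exact_mod_cast Nat.choose_succ_succ' n k
      have hmean : (a ::ₘ s).sum / (a ::ₘ s).card = ν := by simp [hsum, n, ν]
      rw [esymm_cons_succ, hmean, card_cons]
      calc s.esymm (k + 1) + a * s.esymm k
          ≤ n.choose (k + 1) * μ ^ (k + 1) + a * (n.choose k * μ ^ k) := by
            gcongr <;> exact ih hs' _
        _ = ((n + 1).choose (k + 1) : R) * (μ ^ (k + 1) + (k + 1 : ℕ) * μ ^ k * (ν - μ)) := by
            have hνμ : (n + 1) * (ν - μ) = a - μ := by simp only [ν]; field_simp; ring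
            linear_combination (-μ ^ (k + 1)) * hpas - μ ^ k * (ν - μ) * hch
              - (n.choose k : R) * μ ^ k * hνμ
        _ ≤ _ := by gcongr

end Multiset

lemma Feasible.sum_le_one {x : ℕ → ℝ} (hx : Feasible x) (V : Finset ℕ) : ∑ i ∈ V, x i ≤ 1 := by
  obtain ⟨hx0, S, hS0, hS1⟩ := hx
  calc ∑ i ∈ V, x i ≤ ∑ i ∈ V ∪ S, x i :=
        sum_le_sum_of_subset_of_nonneg subset_union_left fun i _ _ => hx0 i
    _ = ∑ i ∈ S, x i := (sum_subset subset_union_right fun i _ hi => hS0 i hi).symm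
    _ = 1 := hS1

lemma Feasible.le_one {x : ℕ → ℝ} (hx : Feasible x) (i : ℕ) : x i ≤ 1 := by
  simpa using hx.sum_le_one {i}

lemma FeasibleOn.feasible {n : ℕ} {x : ℕ → ℝ} (hx : FeasibleOn n x) : Feasible x :=
  ⟨hx.1, Icc 1 n, hx.2.1, hx.2.2⟩

lemma lagEval_mono {E F : Finset (Finset ℕ)} (h : E ⊆ F) {x : ℕ → ℝ} (hx : ∀ i, 0 ≤ x i) :
    lagEval E x ≤ lagEval F x :=
  sum_le_sum_of_subset_of_nonneg h fun _ _ _ => prod_nonneg fun i _ => hx i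

lemma lagEval_le_card (E : Finset (Finset ℕ)) {x : ℕ → ℝ} (hx : Feasible x) :
    lagEval E x ≤ E.card := by
  simpa [lagEval] using sum_le_sum fun e (_ : e ∈ E) =>
    prod_le_one (fun i _ => hx.1 i) fun i _ => hx.le_one i

lemma le_lagrangian (E : Finset (Finset ℕ)) {x : ℕ → ℝ} (hx : Feasible x) :
    lagEval E x ≤ lagrangian E :=
  le_csSup ⟨E.card, by rintro _ ⟨y, hy, rfl⟩; exact lagEval_le_card E hy⟩ ⟨x, hx, rfl⟩

lemma lagEval_powersetCard_le (V : Finset ℕ) (k : ℕ) {x : ℕ → ℝ} (hx : ∀ i ∈ V, 0 ≤ x i) :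
    lagEval (V.powersetCard k) x ≤ V.card.choose k * ((∑ i ∈ V, x i) / V.card) ^ k := by
  simpa [lagEval, esymm_map_val] using
    (V.val.map x).esymm_le_choose_mul_pow (by simpa using hx) k

theorem lagrangian_completeG (s r : ℕ) (hs : 0 < s) :
    lagrangian (completeG s r) = s.choose r / (s : ℝ) ^ r := by
  set u : ℕ → ℝ := fun i => if i ∈ Icc 1 s then (s : ℝ)⁻¹ else 0
  have hu : Feasible u := by
    refine ⟨fun i => by positivity, Icc 1 s, fun i hi => if_neg hi, ?_⟩
    rw [sum_congr rfl fun i hi => if_pos hi]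
    simp [hs.ne']
  have hval : lagEval (completeG s r) u = s.choose r / (s : ℝ) ^ r := by
    rw [lagEval, completeG, sum_congr rfl fun e he => prod_congr rfl fun i hi =>
      if_pos ((mem_powersetCard.1 he).1 hi)]
    rw [sum_congr rfl fun e he => by rw [prod_const, (mem_powersetCard.1 he).2]]
    simp [div_eq_mul_inv]
  refine IsGreatest.csSup_eq ⟨⟨u, hu, hval⟩, ?_⟩
  rintro _ ⟨x, hx, rfl⟩
  calc lagEval (completeG s r) x ≤ s.choose r * ((∑ i ∈ Icc 1 s, x i) / s) ^ r := by
        simpa [completeG] using lagEval_powersetCard_le (Icc 1 s) r fun i _ => hx.1 i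
    _ ≤ s.choose r * (1 / s) ^ r := by
        gcongr
        · exact div_nonneg (sum_nonneg fun i _ => hx.1 i) s.cast_nonneg
        · exact hx.sum_le_one _
    _ = s.choose r / (s : ℝ) ^ r := by ring

lemma hasDerivAt_lagEval_line (E : Finset (Finset ℕ)) (x w : ℕ → ℝ) :
    HasDerivAt (fun ε : ℝ => lagEval E (x + ε • w))
      (∑ e ∈ E, ∑ i ∈ e, w i * ∏ j ∈ e.erase i, x j) 0 := by
  unfold lagEval
  refine HasDerivAt.fun_sum fun e _ => ?_
  have := HasDerivAt.fun_finsetProd (u := e) (x := (0 : ℝ))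
    (f := fun i ε => x i + ε * w i) fun i _ => (hasDerivAt_mul_const (w i)).const_add (x i)
  simpa [mul_comm] using this

lemma lagEval_nbhd (E : Finset (Finset ℕ)) (x : ℕ → ℝ) (i : ℕ) :
    lagEval (nbhd E i) x = ∑ e ∈ E with i ∈ e, ∏ j ∈ e.erase i, x j := by
  refine sum_image fun e₁ h₁ e₂ h₂ h => ?_
  rw [← insert_erase (mem_filter.1 h₁).2, ← insert_erase (mem_filter.1 h₂).2]
  exact congrArg (insert i) h

lemma Feasible.add_smul_sub_single {x : ℕ → ℝ} (hx : Feasible x) {i : ℕ} (hi : 0 < x i)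
    {ε : ℝ} (hε : ε ∈ Set.Ioo (-1) (x i)) :
    Feasible (x + ε • (x - Pi.single i 1)) := by
  obtain ⟨hε₁, hε₂⟩ := hε
  have hx1 := hx.le_one i
  obtain ⟨hx0, S, hS0, hS1⟩ := hx
  have hiS : i ∈ S := by_contra fun h => hi.ne' (hS0 i h)
  refine ⟨fun j => ?_, S, fun j hj => ?_, ?_⟩
  · rcases eq_or_ne j i with rfl | hj
    · simp only [Pi.add_apply, Pi.smul_apply, Pi.sub_apply, Pi.single_eq_same, smul_eq_mul]
      nlinarith
    · simp only [Pi.add_apply, Pi.smul_apply, Pi.sub_apply, Pi.single_eq_of_ne hj, smul_eq_mul]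
      nlinarith [hx0 j]
  · have hj' : j ≠ i := fun h => hj (h ▸ hiS)
    simp [hS0 j hj, Pi.single_eq_of_ne hj']
  · simp [sum_add_distrib, ← mul_sum, sum_sub_distrib, hS1, hiS]

/-- The Lagrange condition at a vertex of positive weight: `x` is an interior point of the feasible
segment through `x` and the vertex `i`, so the derivative of `λ(G, ·)` along it,
`r λ(G, x) - λ(E_i, x)`, vanishes. -/
theorem lagEval_nbhd_eq_of_optimal {r : ℕ} {E : Finset (Finset ℕ)} (hE : ∀ e ∈ E, e.card = r)
    {x : ℕ → ℝ} (hx : Feasible x) (hopt : lagEval E x = lagrangian E) {i : ℕ} (hi : 0 < x i) :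
    lagEval (nbhd E i) x = r * lagEval E x := by
  set w : ℕ → ℝ := x - Pi.single i 1
  have hmax : IsLocalMax (fun ε : ℝ => lagEval E (x + ε • w)) 0 := by
    filter_upwards [Ioo_mem_nhds (neg_one_lt_zero : (-1 : ℝ) < 0) hi] with ε hε
    simpa [hopt] using le_lagrangian E (hx.add_smul_sub_single hi hε)
  have hcrit := hmax.hasDerivAt_eq_zero (hasDerivAt_lagEval_line E x _)
  have hedge : ∀ e ∈ E, ∑ j ∈ e, w j * ∏ l ∈ e.erase j, x l
      = r * ∏ l ∈ e, x l - if i ∈ e then ∏ l ∈ e.erase i, x l else 0 := by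
    intro e he
    have hw : ∀ j, w j = x j - (Pi.single i 1 : ℕ → ℝ) j := fun _ => rfl
    rw [sum_congr rfl fun j hj => by rw [hw, sub_mul, mul_prod_erase e x hj]]
    simp [sum_sub_distrib, hE e he, Pi.single_apply]
  rw [sum_congr rfl hedge, sum_sub_distrib, ← sum_filter, ← mul_sum] at hcrit
  rw [lagEval_nbhd, lagEval]
  linarith

lemma nbhd_subset_powersetCard {r n : ℕ} {E : Finset (Finset ℕ)} (hE : IsRGraphOn r n E)
    (i : ℕ) : nbhd E i ⊆ ((Icc 1 n).erase i).powersetCard (r - 1) := by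
  intro A hA
  obtain ⟨e, he, rfl⟩ := mem_image.1 hA
  obtain ⟨heE, hie⟩ := mem_filter.1 he
  rw [mem_powersetCard, card_erase_of_mem hie, (hE e heE).1]
  exact ⟨erase_subset_erase i (hE e heE).2, rfl⟩

theorem mul_lagrangian_le_of_optimal {r t : ℕ} {E : Finset (Finset ℕ)} (hE : IsRGraphOn r t E)
    {x : ℕ → ℝ} (hx : FeasibleOn t x) (hopt : lagEval E x = lagrangian E) {i : ℕ}
    (hi : i ∈ Icc 1 t) (hxi : 0 < x i) :
    r * lagrangian E ≤ (t - 1).choose (r - 1) * ((1 - x i) / ((t : ℝ) - 1)) ^ (r - 1) := by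
  have hcard : (((Icc 1 t).erase i).card : ℝ) = t - 1 := by
    rw [card_erase_of_mem hi, Nat.card_Icc, Nat.add_sub_cancel,
      Nat.cast_sub ((mem_Icc.1 hi).1.trans (mem_Icc.1 hi).2), Nat.cast_one]
  rw [← hopt, ← lagEval_nbhd_eq_of_optimal (fun e he => (hE e he).1) hx.feasible hopt hxi]
  calc lagEval (nbhd E i) x ≤ lagEval (((Icc 1 t).erase i).powersetCard (r - 1)) x :=
        lagEval_mono (nbhd_subset_powersetCard hE i) hx.1
    _ ≤ _ := lagEval_powersetCard_le _ _ fun j _ => hx.1 j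
    _ = _ := by
        rw [hcard, sum_erase_eq_sub hi, hx.2.2, card_erase_of_mem hi, Nat.card_Icc,
          Nat.add_sub_cancel]

lemma lagrangian_le_of_one_le_mul {r t : ℕ} (hr : 1 ≤ r) (hrt : r < t)
    {E : Finset (Finset ℕ)} (hE : IsRGraphOn r t E) {x : ℕ → ℝ} (hx : FeasibleOn t x)
    (hopt : lagEval E x = lagrangian E) {i : ℕ} (hi : i ∈ Icc 1 t)
    (hxi : 1 ≤ ((t : ℝ) - r + 1) * x i) :
    lagrangian E ≤ 1 / r * (t - 1).choose (r - 1) *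
      (((t : ℝ) - r) / (((t : ℝ) - r + 1) * ((t : ℝ) - 1))) ^ (r - 1) := by
  have hr' : (1 : ℝ) ≤ r := by exact_mod_cast hr
  have hrt' : (r : ℝ) + 1 ≤ t := by exact_mod_cast hrt
  have hxpos : 0 < x i := pos_of_mul_pos_right (one_pos.trans_le hxi) (by linarith)
  have hweight : (1 - x i) / ((t : ℝ) - 1)
      ≤ ((t : ℝ) - r) / (((t : ℝ) - r + 1) * ((t : ℝ) - 1)) := by
    rw [← div_div]
    gcongr
    · linarith
    · rw [le_div_iff₀ (by linarith)]
      linarith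
  calc lagrangian E = 1 / r * (r * lagrangian E) := by field_simp
    _ ≤ 1 / r * ((t - 1).choose (r - 1) * ((1 - x i) / ((t : ℝ) - 1)) ^ (r - 1)) :=
        mul_le_mul_of_nonneg_left (mul_lagrangian_le_of_optimal hE hx hopt hi hxpos)
          (by positivity)
    _ ≤ _ := by
        rw [← mul_assoc]
        gcongr
        exact div_nonneg (sub_nonneg.2 (hx.feasible.le_one i)) (by linarith)

lemma two_le_mul_of_antitone {t p : ℕ} {x : ℕ → ℝ} (hx : FeasibleOn t x)
    (hmono : ∀ i j : ℕ, 1 ≤ i → i ≤ j → j ≤ t → x j ≤ x i) (hp : p + 2 ≤ t)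
    (h : x (p + 1) + x (p + 2) ≤ x 1) : 2 ≤ ((t : ℝ) + p) * x 1 := by
  have hsplit : ∑ i ∈ Icc 1 t, x i
      = ∑ i ∈ Ioc 0 p, x i + (x (p + 1) + ∑ i ∈ Ioc (p + 1) t, x i) := by
    rw [show Icc 1 t = Ioc 0 t by ext; simp; omega,
      ← sum_Ioc_consecutive x (Nat.zero_le p) (by omega : p ≤ t),
      ← sum_Ioc_consecutive x (Nat.le_succ p) (by omega : p + 1 ≤ t), Nat.Ioc_succ_singleton,
      sum_singleton]
  have hhead : ∑ i ∈ Ioc 0 p, x i ≤ p * x 1 := by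
    simpa using sum_le_sum fun i (hi : i ∈ Ioc 0 p) =>
      hmono 1 i le_rfl (mem_Ioc.1 hi).1 (by have := (mem_Ioc.1 hi).2; omega)
  have htail : ∑ i ∈ Ioc (p + 1) t, x i ≤ ((t : ℝ) - p - 1) * x (p + 2) := by
    have := sum_le_sum fun i (hi : i ∈ Ioc (p + 1) t) =>
      hmono (p + 2) i (by omega) (mem_Ioc.1 hi).1 (mem_Ioc.1 hi).2
    rw [sum_const, Nat.card_Ioc, nsmul_eq_mul, Nat.cast_sub (by omega)] at this
    push_cast at this
    linarith
  have hsum := hx.2.2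
  have hba : x (p + 2) ≤ x (p + 1) := hmono _ _ (by omega) (by omega) hp
  have hb : 0 ≤ x (p + 2) := hx.1 _
  have hgap : (0 : ℝ) ≤ t - p - 2 := by
    have : ((p + 2 : ℕ) : ℝ) ≤ t := by exact_mod_cast hp
    push_cast at this; linarith
  nlinarith [mul_nonneg hgap (sub_nonneg.2 hba)]

lemma prod_Icc_eq_descFactorial {n k : ℕ} (h : k ≤ n) :
    ∏ i ∈ Icc (n - k + 1) n, i = n.descFactorial k := by
  induction k with
  | zero => simp
  | succ k ih =>
    rw [Nat.descFactorial_succ, ← ih (by omega), show n - (k + 1) + 1 = n - k by omega,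
      ← insert_Icc_add_one_left_eq_Icc (by omega : n - k ≤ n), prod_insert (by simp)]

lemma cast_prod_Icc_eq_factorial_mul_choose {n k : ℕ} (h : k ≤ n) :
    ∏ i ∈ Icc (n - k + 1) n, (i : ℝ) = k.factorial * n.choose k := by
  rw [← Nat.cast_prod, prod_Icc_eq_descFactorial h, Nat.descFactorial_eq_factorial_mul_choose,
    Nat.cast_mul]

lemma pow_mul_add_lt_add_one_pow {a : ℝ} (ha : 0 < a) {m : ℕ} (hm : 1 ≤ m) :
    a ^ m * (a + (m + 1)) < (a + 1) ^ (m + 1) := by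
  induction m, hm using Nat.le_induction with
  | base => norm_num; nlinarith
  | succ m _ ih =>
    have hpos : 0 < a ^ m := pow_pos ha m
    calc a ^ (m + 1) * (a + ((m + 1 : ℕ) + 1))
        < a ^ m * (a + (m + 1)) * (a + 1) := by push_cast; rw [pow_succ]; nlinarith
      _ < (a + 1) ^ (m + 1) * (a + 1) := by gcongr
      _ = (a + 1) ^ (m + 1 + 1) := by ring

lemma bound_eq_inv_mul_choose_mul_pow {r t : ℕ} (hr : 3 ≤ r) (hrt : r < t) :
    1 / (r.factorial : ℝ) * ((t : ℝ) - r) ^ (r - 1) *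
        (∏ i ∈ Icc (t - r + 2) (t - 2), (i : ℝ)) /
        (((t : ℝ) - r + 1) ^ (r - 2) * ((t : ℝ) - 1) ^ (r - 2))
      = 1 / r * (t - 1).choose (r - 1) *
        (((t : ℝ) - r) / (((t : ℝ) - r + 1) * ((t : ℝ) - 1))) ^ (r - 1) := by
  have hprod : ∏ i ∈ Icc (t - r + 1) (t - 1), (i : ℝ)
      = ((t : ℝ) - r + 1) * (∏ i ∈ Icc (t - r + 2) (t - 2), (i : ℝ)) * ((t : ℝ) - 1) := by
    rw [← insert_Icc_add_one_left_eq_Icc (by omega : t - r + 1 ≤ t - 1), prod_insert (by simp),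
      show t - r + 1 + 1 = t - r + 2 by omega, show t - 1 = t - 2 + 1 by omega,
      prod_Icc_succ_top (by omega)]
    push_cast [show r ≤ t by omega, show 2 ≤ t by omega]
    ring
  have hchoose := cast_prod_Icc_eq_factorial_mul_choose (n := t - 1) (k := r - 1) (by omega)
  rw [show t - 1 - (r - 1) + 1 = t - r + 1 by omega, hprod] at hchoose
  obtain ⟨m, rfl⟩ : ∃ m, r = m + 3 := ⟨r - 3, by omega⟩
  have hfac : ((m + 3).factorial : ℝ) = (m + 3) * (m + 2).factorial := by
    push_cast [Nat.factorial_succ]; ring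
  have ht1 : (0 : ℝ) < t - 1 := by
    have : ((m + 3 : ℕ) : ℝ) < t := by exact_mod_cast hrt
    push_cast at this; linarith
  have ht2 : (0 : ℝ) < t - (m + 3 : ℕ) + 1 := by
    have : ((m + 3 : ℕ) : ℝ) < t := by exact_mod_cast hrt
    linarith
  simp only [show m + 3 - 1 = m + 2 by omega, show m + 3 - 2 = m + 1 by omega] at hchoose ⊢
  have hC : ((t - 1).choose (m + 2) : ℝ) = ((t : ℝ) - (m + 3 : ℕ) + 1) *
      (∏ i ∈ Icc (t - (m + 3) + 2) (t - 2), (i : ℝ)) * ((t : ℝ) - 1) / (m + 2).factorial := by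
    rw [hchoose]; field_simp
  rw [hC, hfac]
  generalize (t : ℝ) - (m + 3 : ℕ) = A at ht2 ⊢
  generalize (t : ℝ) - 1 = T at ht1 ⊢
  rw [div_pow, mul_pow]
  field_simp
  push_cast
  ring

lemma inv_mul_choose_mul_pow_lt {r t : ℕ} (hr : 3 ≤ r) (hrt : r < t) :
    1 / r * (t - 1).choose (r - 1) *
        (((t : ℝ) - r) / (((t : ℝ) - r + 1) * ((t : ℝ) - 1))) ^ (r - 1)
      < (t - 1).choose r / ((t : ℝ) - 1) ^ r := by
  have hpascal : ((t - 1).choose r : ℝ) = (t - 1).choose (r - 1) * ((t : ℝ) - r) / r := by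
    have h := Nat.choose_succ_right_eq (t - 1) (r - 1)
    rw [Nat.sub_add_cancel (by omega : 1 ≤ r), show t - 1 - (r - 1) = t - r by omega] at h
    rw [eq_div_iff (by positivity), ← Nat.cast_sub (by omega : r ≤ t)]
    exact_mod_cast h
  have hC : (0 : ℝ) < (t - 1).choose (r - 1) := by exact_mod_cast Nat.choose_pos (by omega)
  have hrt' : (r : ℝ) + 1 ≤ t := by exact_mod_cast hrt
  have hA : (0 : ℝ) < t - r := by linarith
  have hT : (0 : ℝ) < t - 1 := by linarith [(Nat.one_le_cast.2 (by omega : 1 ≤ r) : (1 : ℝ) ≤ r)]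
  obtain ⟨m, rfl⟩ : ∃ m, r = m + 3 := ⟨r - 3, by omega⟩
  have hkey := pow_mul_add_lt_add_one_pow hA (m := m + 1) (by omega)
  simp only [show m + 3 - 1 = m + 2 by omega] at hC ⊢
  rw [hpascal]
  set C := ((t - 1).choose (m + 2) : ℝ)
  set A := (t : ℝ) - (m + 3 : ℕ)
  set T := (t : ℝ) - 1
  have hq : A ^ (m + 1) * T / (A + 1) ^ (m + 2) < 1 := by
    rw [div_lt_one (pow_pos (by linarith) _), show T = A + (m + 2) by simp [A, T]; ring]
    push_cast at hkey
    linarith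
  calc 1 / ((m + 3 : ℕ) : ℝ) * C * (A / ((A + 1) * T)) ^ (m + 2)
      = C * A / (m + 3 : ℕ) / T ^ (m + 3) * (A ^ (m + 1) * T / (A + 1) ^ (m + 2)) := by
        have : A + 1 ≠ 0 := by linarith
        rw [div_pow, mul_pow]
        field_simp
        ring
    _ < C * A / (m + 3 : ℕ) / T ^ (m + 3) :=
        mul_lt_of_lt_one_right (div_pos (div_pos (mul_pos hC hA) (by positivity)) (pow_pos hT _)) hq

/-- Lemma 2.6(a): for an r-graph `G` on `[t]` (`r ≥ 4`, `t ≥ 2r`) with an optimal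
weighting `x` satisfying `x_1 ≥ ⋯ ≥ x_t ≥ 0`, either `x_1 < x_{t−2r+3} + x_{t−2r+4}`,
or λ(G) is at most the stated bound, which is strictly smaller than
`(1/r!)·(∏_{i=t−r}^{t−1} i)/(t−1)^r = λ([t−1]^{(r)})`. -/
theorem stmt12 (r t : ℕ) (hr : 4 ≤ r) (ht : 2 * r ≤ t)
    (E : Finset (Finset ℕ)) (hE : IsRGraphOn r t E)
    (x : ℕ → ℝ) (hfeas : FeasibleOn t x) (hopt : lagEval E x = lagrangian E)
    (hmono : ∀ i j : ℕ, 1 ≤ i → i ≤ j → j ≤ t → x j ≤ x i) :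
    x 1 < x (t - 2 * r + 3) + x (t - 2 * r + 4) ∨
      (lagrangian E ≤
          1 / (r.factorial : ℝ) * ((t : ℝ) - r) ^ (r - 1) *
            (∏ i ∈ Finset.Icc (t - r + 2) (t - 2), (i : ℝ)) /
            (((t : ℝ) - r + 1) ^ (r - 2) * ((t : ℝ) - 1) ^ (r - 2)) ∧
        1 / (r.factorial : ℝ) * ((t : ℝ) - r) ^ (r - 1) *
            (∏ i ∈ Finset.Icc (t - r + 2) (t - 2), (i : ℝ)) /
            (((t : ℝ) - r + 1) ^ (r - 2) * ((t : ℝ) - 1) ^ (r - 2)) <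
          1 / (r.factorial : ℝ) * (∏ i ∈ Finset.Icc (t - r) (t - 1), (i : ℝ)) /
            ((t : ℝ) - 1) ^ r ∧
        1 / (r.factorial : ℝ) * (∏ i ∈ Finset.Icc (t - r) (t - 1), (i : ℝ)) /
            ((t : ℝ) - 1) ^ r = lagrangian (completeG (t - 1) r)) := by
  refine or_iff_not_imp_left.2 fun hcase => ?_
  have hr3 : 3 ≤ r := by omega
  have hrt : r < t := by omega
  have hx1 : 1 ≤ ((t : ℝ) - r + 1) * x 1 := by
    have h := two_le_mul_of_antitone hfeas hmono (p := t - 2 * r + 2) (by omega) (by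
      rw [show t - 2 * r + 2 + 1 = t - 2 * r + 3 by omega,
        show t - 2 * r + 2 + 2 = t - 2 * r + 4 by omega]
      exact not_lt.1 hcase)
    rw [Nat.cast_add, Nat.cast_sub ht] at h
    push_cast at h
    linarith
  have hcomplete : 1 / (r.factorial : ℝ) * (∏ i ∈ Icc (t - r) (t - 1), (i : ℝ)) / ((t : ℝ) - 1) ^ r
      = (t - 1).choose r / ((t : ℝ) - 1) ^ r := by
    rw [show t - r = t - 1 - r + 1 by omega, cast_prod_Icc_eq_factorial_mul_choose (by omega)]
    field_simp
  rw [bound_eq_inv_mul_choose_mul_pow hr3 hrt, hcomplete,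
    lagrangian_completeG (t - 1) r (by omega), Nat.cast_sub (by omega), Nat.cast_one]
  exact ⟨lagrangian_le_of_one_le_mul (by omega) hrt hE hfeas hopt (by simp; omega) hx1,
    inv_mul_choose_mul_pow_lt hr3 hrt, rfl⟩
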